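/- arXiv:2301.08928 — 6 statements merged into one kernel-verified Lean document; each statement's English description precedes it below -/
import Mathlib

section
/- Let n ≥ 1, let θ > 0, ε > 0, let ρ : Fin n → ℝ with ρ i ≥ 0 for all i, let u : Fin n → EuclideanSpace ℝ (Fin 3), and let b : Fin n → Fin n → ℝ satisfy b i j = b j i ≥ 0 for all i ≠ j. Define d : Fin n → EuclideanSpace ℝ (Fin 3) by ε • d i = -θ • ∑_{j ≠ i} b i j * ρ i * ρ j • (u i - u j). Then the frictional dissipation is non-negative: -(1/θ) ∑_i ⟪u i, d i⟫ ≥ 0. -/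
open Finset RealInnerProductSpace

theorem frictional_dissipation_nonneg
    (n : ℕ) (hn : 1 ≤ n) (θ ε : ℝ) (hθ : 0 < θ) (hε : 0 < ε)
    (ρ : Fin n → ℝ) (hρ : ∀ i, 0 ≤ ρ i)
    (u : Fin n → EuclideanSpace ℝ (Fin 3))
    (b : Fin n → Fin n → ℝ)
    (hb : ∀ i j, i ≠ j → b i j = b j i)
    (hbpos : ∀ i j, i ≠ j → 0 ≤ b i j)
    (d : Fin n → EuclideanSpace ℝ (Fin 3))
    (hd : ∀ i, ε • d i =
      -θ • ∑ j ∈ Finset.univ.erase i, (b i j * ρ i * ρ j) • (u i - u j)) :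
    -(1 / θ) * ∑ i, ⟪u i, d i⟫ ≥ 0 := by
  set c : Fin n → Fin n → ℝ := fun i j => b i j * ρ i * ρ j with hc
  have hcsymm : ∀ i j : Fin n, i ≠ j → c i j = c j i := by
    intro i j hij
    simp only [hc]
    rw [hb i j hij]; ring
  have hcpos : ∀ i j : Fin n, i ≠ j → 0 ≤ c i j := by
    intro i j hij
    exact mul_nonneg (mul_nonneg (hbpos i j hij) (hρ i)) (hρ j)
  set T : ℝ := ∑ i, ∑ j ∈ Finset.univ.erase i, c i j * ⟪u i, u i - u j⟫ with hT
  have key : ∀ i, ε * ⟪u i, d i⟫ =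
      -θ * ∑ j ∈ Finset.univ.erase i, c i j * ⟪u i, u i - u j⟫ := by
    intro i
    calc ε * ⟪u i, d i⟫ = ⟪u i, ε • d i⟫ := (real_inner_smul_right _ _ _).symm
    _ = ⟪u i, -θ • ∑ j ∈ Finset.univ.erase i, (c i j) • (u i - u j)⟫ := by
        rw [hd i]
    _ = -θ * ⟪u i, ∑ j ∈ Finset.univ.erase i, (c i j) • (u i - u j)⟫ :=
        real_inner_smul_right _ _ _
    _ = -θ * ∑ j ∈ Finset.univ.erase i, c i j * ⟪u i, u i - u j⟫ := by
        rw [inner_sum]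
        congr 1
        refine Finset.sum_congr rfl fun j _ => ?_
        exact real_inner_smul_right _ _ _
  have hsum : ε * ∑ i, ⟪u i, d i⟫ = -θ * T := by
    rw [Finset.mul_sum, hT, Finset.mul_sum]
    exact Finset.sum_congr rfl fun i _ => key i
  -- symmetrization
  have hswap : T = ∑ i, ∑ j ∈ Finset.univ.erase i, c j i * ⟪u j, u j - u i⟫ := by
    rw [hT]
    rw [Finset.sum_comm' (s := Finset.univ) (t := fun i => Finset.univ.erase i)
      (t' := Finset.univ) (s' := fun j => Finset.univ.erase j) ?_]
    intro i j
    simp [eq_comm, ne_comm]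
  have h2T : 2 * T = ∑ i, ∑ j ∈ Finset.univ.erase i, c i j * ⟪u i - u j, u i - u j⟫ := by
    rw [two_mul]
    nth_rewrite 2 [hswap]
    nth_rewrite 1 [hT]
    rw [← Finset.sum_add_distrib]
    refine Finset.sum_congr rfl fun i _ => ?_
    rw [← Finset.sum_add_distrib]
    refine Finset.sum_congr rfl fun j hj => ?_
    have hij : i ≠ j := (Finset.ne_of_mem_erase hj).symm
    rw [← hcsymm i j hij, ← mul_add]
    congr 1
    have : ⟪u j, u j - u i⟫ = -⟪u j, u i - u j⟫ := by
      rw [← inner_neg_right]; congr 1; abel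
    rw [this, inner_sub_left]
    ring
  have hTnonneg : 0 ≤ T := by
    have : 0 ≤ 2 * T := by
      rw [h2T]
      refine Finset.sum_nonneg fun i _ => Finset.sum_nonneg fun j hj => ?_
      have hij : i ≠ j := (Finset.ne_of_mem_erase hj).symm
      exact mul_nonneg (hcpos i j hij) (real_inner_self_nonneg)
    linarith
  have hsum' : ∑ i, ⟪u i, d i⟫ = -θ * T / ε := by
    field_simp at hsum ⊢
    linarith
  rw [hsum']
  rw [ge_iff_le]
  have : -(1 / θ) * (-θ * T / ε) = T / ε := by
    field_simp
  rw [this]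
  positivity
end

section
/- Let n ≥ 1, let ρ : Fin n → ℝ with ρ i > 0 for all i, and let b : Fin n → Fin n → ℝ satisfy b i j = b j i > 0 for all i ≠ j. Define B ∈ Matrix (Fin n) (Fin n) ℝ by B i i = ∑_{j ≠ i} b i j * ρ i * ρ j and B i j = -(b i j * ρ i * ρ j) for i ≠ j. Then the kernel of the linear map x ↦ B *ᵥ x is exactly the span of the all-ones vector: B *ᵥ x = 0 if and only if x is constant, i.e. x i = x j for all i, j. -/
open Finset Matrix

theorem friction_matrix_kernel
    (n : ℕ) (hn : 1 ≤ n)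
    (ρ : Fin n → ℝ) (hρ : ∀ i, 0 < ρ i)
    (b : Fin n → Fin n → ℝ)
    (hb : ∀ i j, i ≠ j → b i j = b j i)
    (hbpos : ∀ i j, i ≠ j → 0 < b i j)
    (B : Matrix (Fin n) (Fin n) ℝ)
    (hBdiag : ∀ i, B i i = ∑ j ∈ Finset.univ.erase i, b i j * ρ i * ρ j)
    (hBoff : ∀ i j, i ≠ j → B i j = -(b i j * ρ i * ρ j)) :
    ∀ x : Fin n → ℝ, B *ᵥ x = 0 ↔ ∀ i j, x i = x j := by
  intro x
  have expand : ∀ i, (B *ᵥ x) i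
      = ∑ j ∈ Finset.univ.erase i, b i j * ρ i * ρ j * (x i - x j) := by
    intro i
    simp only [mulVec, dotProduct]
    rw [← Finset.add_sum_erase _ _ (Finset.mem_univ i), hBdiag i, Finset.sum_mul,
      ← Finset.sum_add_distrib]
    refine Finset.sum_congr rfl fun j hj => ?_
    have hij : i ≠ j := (Finset.ne_of_mem_erase hj).symm
    rw [hBoff i j hij]; ring
  constructor
  · intro h
    have hne : (Finset.univ : Finset (Fin n)).Nonempty := ⟨⟨0, hn⟩, Finset.mem_univ _⟩
    obtain ⟨i, -, hi⟩ := Finset.exists_max_image Finset.univ x hne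
    have h0 : ∑ j ∈ Finset.univ.erase i, b i j * ρ i * ρ j * (x i - x j) = 0 := by
      rw [← expand i, h]; rfl
    have hterm : ∀ j ∈ Finset.univ.erase i, b i j * ρ i * ρ j * (x i - x j) = 0 := by
      rw [← Finset.sum_eq_zero_iff_of_nonneg]
      · exact h0
      · intro j hj
        have hij : i ≠ j := (Finset.ne_of_mem_erase hj).symm
        exact mul_nonneg
          (le_of_lt (mul_pos (mul_pos (hbpos i j hij) (hρ i)) (hρ j)))
          (sub_nonneg.2 (hi j (Finset.mem_univ j)))
    have key : ∀ j, x j = x i := by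
      intro j
      by_cases hij : j = i
      · rw [hij]
      · have hj : j ∈ Finset.univ.erase i := Finset.mem_erase.2 ⟨hij, Finset.mem_univ _⟩
        have := hterm j hj
        have hpos : 0 < b i j * ρ i * ρ j :=
          mul_pos (mul_pos (hbpos i j (Ne.symm hij)) (hρ i)) (hρ j)
        have : x i - x j = 0 := by
          rcases mul_eq_zero.1 this with h' | h'
          · exact absurd h' (ne_of_gt hpos)
          · exact h'
        linarith
    intro i' j'
    rw [key i', key j']
  · intro h
    funext i
    rw [expand i]
    refine Finset.sum_eq_zero fun j _ => ?_
    rw [h i j]; ring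
end

section
/- Let n ≥ 1, let ρ : Fin n → ℝ with ρ i > 0 for all i, and let b : Fin n → Fin n → ℝ satisfy b i j = b j i > 0 for all i ≠ j. Define B ∈ Matrix (Fin n) (Fin n) ℝ by B i i = ∑_{j ≠ i} b i j * ρ i * ρ j and B i j = -(b i j * ρ i * ρ j) for i ≠ j. Then for d : Fin n → ℝ, the linear system B *ᵥ x = d has a solution if and only if ∑_i d i = 0. -/
open Finset Matrix

/-!
Zero column sums put the range of `B` inside the hyperplane `∑ i, d i = 0`. Zero row sums make
`B` annihilate the constant vectors, and since the off-diagonal entries are negative, a maximum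
principle shows these are the whole kernel: at a maximal coordinate of `x` with `B x = 0`, the
row `∑ j, B i j (x j - x i)` is a sum of nonnegative terms. By rank–nullity the range then has
codimension one, so it fills the hyperplane.
-/

theorem LinearMap.range_eq_ker_of_ker_le_span_singleton {K V : Type*} [Field K] [AddCommGroup V]
    [Module K V] [FiniteDimensional K V] {f : V →ₗ[K] V} {σ : Module.Dual K V} {v : V}
    (hσ : σ ≠ 0) (hrange : range f ≤ ker σ) (hker : ker f ≤ K ∙ v) : range f = ker σ := by
  refine Submodule.eq_of_le_of_finrank_le hrange ?_
  have hσ_rank := Module.Dual.finrank_ker_add_one_of_ne_zero hσ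
  have hf_rank := f.finrank_range_add_finrank_ker
  have hker_rank : Module.finrank K (ker f) ≤ 1 :=
    (Submodule.finrank_mono hker).trans <| by simpa using finrank_span_le_card ({v} : Set V)
  omega

namespace Matrix

variable {ι K : Type*} [Fintype ι]

theorem mulVec_apply_eq_sum_mul_sub [CommRing K] {A : Matrix ι ι K} (hrow : A *ᵥ 1 = 0)
    (x : ι → K) (i : ι) : (A *ᵥ x) i = ∑ j, A i j * (x j - x i) := by
  have hrow_i : ∑ j, A i j = 0 := by simpa [mulVec, dotProduct] using congrFun hrow i
  simp [mulVec, dotProduct, mul_sub, sum_sub_distrib, ← sum_mul, hrow_i]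

section OrderedRing

variable [CommRing K] [LinearOrder K] [IsStrictOrderedRing K]

theorem apply_eq_of_mulVec_eq_zero {A : Matrix ι ι K} (hrow : A *ᵥ 1 = 0)
    (hoff : ∀ i j, i ≠ j → A i j < 0) {x : ι → K} (hx : A *ᵥ x = 0) (i j : ι) : x i = x j := by
  have : Nonempty ι := ⟨i⟩
  obtain ⟨m, hm⟩ := Finite.exists_max x
  have hterm_nonneg : ∀ k, 0 ≤ A m k * (x k - x m) := fun k => by
    rcases eq_or_ne m k with rfl | hmk
    · simp
    · exact mul_nonneg_of_nonpos_of_nonpos (hoff m k hmk).le (sub_nonpos.2 (hm k))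
  have hsum : ∑ k, A m k * (x k - x m) = 0 := by
    rw [← mulVec_apply_eq_sum_mul_sub hrow, hx, Pi.zero_apply]
  have hconst : ∀ k, x k = x m := fun k => by
    rcases eq_or_ne m k with rfl | hmk
    · rfl
    · have hterm := (sum_eq_zero_iff_of_nonneg fun k _ => hterm_nonneg k).1 hsum k (mem_univ k)
      exact sub_eq_zero.1 <| (mul_eq_zero.1 hterm).resolve_left (hoff m k hmk).ne
  rw [hconst i, hconst j]

theorem ker_mulVecLin_le_span_one [Nonempty ι] {A : Matrix ι ι K} (hrow : A *ᵥ 1 = 0)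
    (hoff : ∀ i j, i ≠ j → A i j < 0) : LinearMap.ker A.mulVecLin ≤ K ∙ 1 := by
  intro x hx
  obtain ⟨i⟩ := ‹Nonempty ι›
  refine Submodule.mem_span_singleton.2 ⟨x i, funext fun j => ?_⟩
  simp [apply_eq_of_mulVec_eq_zero hrow hoff hx i j]

end OrderedRing

theorem exists_mulVec_eq_iff_sum_eq_zero [Field K] [LinearOrder K] [IsStrictOrderedRing K]
    [DecidableEq ι] [Nonempty ι] {A : Matrix ι ι K}
    (hrow : A *ᵥ 1 = 0) (hcol : 1 ᵥ* A = 0) (hoff : ∀ i j, i ≠ j → A i j < 0) (d : ι → K) :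
    (∃ x, A *ᵥ x = d) ↔ ∑ i, d i = 0 := by
  set σ := dotProductEquiv K ι 1
  have hrange : LinearMap.range A.mulVecLin ≤ LinearMap.ker σ := by
    rintro _ ⟨x, rfl⟩
    simp [σ, dotProduct_mulVec, hcol]
  have hσ : σ ≠ 0 := (LinearEquiv.map_ne_zero_iff _).2 one_ne_zero
  have h := LinearMap.range_eq_ker_of_ker_le_span_singleton hσ hrange
    (ker_mulVecLin_le_span_one hrow hoff)
  simpa [σ, one_dotProduct] using SetLike.ext_iff.1 h d

end Matrix

theorem friction_matrix_solvability
    (n : ℕ) (hn : 1 ≤ n)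
    (ρ : Fin n → ℝ) (hρ : ∀ i, 0 < ρ i)
    (b : Fin n → Fin n → ℝ)
    (hb : ∀ i j, i ≠ j → b i j = b j i)
    (hbpos : ∀ i j, i ≠ j → 0 < b i j)
    (B : Matrix (Fin n) (Fin n) ℝ)
    (hBdiag : ∀ i, B i i = ∑ j ∈ Finset.univ.erase i, b i j * ρ i * ρ j)
    (hBoff : ∀ i j, i ≠ j → B i j = -(b i j * ρ i * ρ j))
    (d : Fin n → ℝ) :
    (∃ x : Fin n → ℝ, B *ᵥ x = d) ↔ ∑ i, d i = 0 := by
  have : Nonempty (Fin n) := ⟨⟨0, hn⟩⟩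
  have hsymm : Bᵀ = B := by
    ext i j
    rcases eq_or_ne i j with rfl | hij
    · rfl
    · rw [transpose_apply, hBoff i j hij, hBoff j i hij.symm, hb j i hij.symm]
      ring
  have hrow : B *ᵥ 1 = 0 := by
    funext i
    suffices ∑ j, B i j = 0 by simpa [mulVec, dotProduct]
    rw [← add_sum_erase _ _ (mem_univ i), hBdiag i, ← sum_add_distrib]
    refine sum_eq_zero fun j hj => ?_
    rw [hBoff i j (ne_of_mem_erase hj).symm]
    ring
  have hcol : 1 ᵥ* B = 0 := by rwa [← hsymm, vecMul_transpose]
  have hoff : ∀ i j, i ≠ j → B i j < 0 := fun i j hij => by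
    rw [hBoff i j hij]
    exact neg_neg_of_pos (mul_pos (mul_pos (hbpos i j hij) (hρ i)) (hρ j))
  exact exists_mulVec_eq_iff_sum_eq_zero hrow hcol hoff d
end

section
/- Let n ≥ 1, let ρ : Fin n → ℝ with ρ i > 0 for all i, and let b : Fin n → Fin n → ℝ satisfy b i j = b j i > 0 for all i ≠ j. Define B ∈ Matrix (Fin n) (Fin n) ℝ by B i i = ∑_{j ≠ i} b i j * ρ i * ρ j and B i j = -(b i j * ρ i * ρ j) for i ≠ j. Let d : Fin n → ℝ satisfy ∑_i d i = 0. Then there exists exactly one u : Fin n → ℝ such that B *ᵥ u = d and ∑_i ρ i * u i = 0. -/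
open Finset Matrix

theorem maxwell_stefan_unique_solution
    (n : ℕ) (hn : 1 ≤ n)
    (ρ : Fin n → ℝ) (hρ : ∀ i, 0 < ρ i)
    (b : Fin n → Fin n → ℝ)
    (hb : ∀ i j, i ≠ j → b i j = b j i)
    (hbpos : ∀ i j, i ≠ j → 0 < b i j)
    (B : Matrix (Fin n) (Fin n) ℝ)
    (hBdiag : ∀ i, B i i = ∑ j ∈ Finset.univ.erase i, b i j * ρ i * ρ j)
    (hBoff : ∀ i j, i ≠ j → B i j = -(b i j * ρ i * ρ j))
    (d : Fin n → ℝ) (hd : ∑ i, d i = 0) :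
    ∃! u : Fin n → ℝ, B *ᵥ u = d ∧ ∑ i, ρ i * u i = 0 := by
  classical
  -- column sums of B vanish
  have hcol : ∀ j, ∑ i, B i j = 0 := by
    intro j
    rw [← Finset.sum_erase_add _ _ (Finset.mem_univ j), hBdiag]
    have h1 : ∑ i ∈ Finset.univ.erase j, B i j
        = ∑ i ∈ Finset.univ.erase j, -(b j i * ρ j * ρ i) := by
      refine Finset.sum_congr rfl fun i hi => ?_
      have hij : i ≠ j := Finset.ne_of_mem_erase hi
      rw [hBoff i j hij, hb i j hij]; ring
    rw [h1, Finset.sum_neg_distrib]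
    ring
  -- row expansion of B *ᵥ u
  have hrow : ∀ (u : Fin n → ℝ) i,
      (B *ᵥ u) i = ∑ j ∈ Finset.univ.erase i, b i j * ρ i * ρ j * (u i - u j) := by
    intro u i
    have h0 : (B *ᵥ u) i = ∑ j, B i j * u j := rfl
    rw [h0, ← Finset.sum_erase_add _ _ (Finset.mem_univ i), hBdiag]
    have h2 : ∑ j ∈ Finset.univ.erase i, B i j * u j
        = ∑ j ∈ Finset.univ.erase i, -(b i j * ρ i * ρ j * u j) := by
      refine Finset.sum_congr rfl fun j hj => ?_
      rw [hBoff i j (Finset.ne_of_mem_erase hj).symm]; ring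
    have h3 : ∑ j ∈ Finset.univ.erase i, b i j * ρ i * ρ j * (u i - u j)
        = (∑ j ∈ Finset.univ.erase i, b i j * ρ i * ρ j) * u i
          - ∑ j ∈ Finset.univ.erase i, b i j * ρ i * ρ j * u j := by
      rw [Finset.sum_mul, ← Finset.sum_sub_distrib]
      exact Finset.sum_congr rfl fun j _ => by ring
    rw [h2, h3, Finset.sum_neg_distrib]
    ring
  -- erase sums as ite sums over the full square
  have key : ∀ f : Fin n → ℝ, ∀ i : Fin n,
      ∑ j ∈ Finset.univ.erase i, f j
        = ∑ j, if j = i then 0 else f j := by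
    intro f i
    rw [show (Finset.univ.erase i) = Finset.univ.filter (· ≠ i) from
      (Finset.filter_ne' Finset.univ i).symm, Finset.sum_filter]
    exact Finset.sum_congr rfl fun j _ => by by_cases h : j = i <;> simp [h]
  -- quadratic-form identity
  have hquad : ∀ u : Fin n → ℝ,
      2 * (∑ i, u i * (B *ᵥ u) i)
        = ∑ i, ∑ j ∈ Finset.univ.erase i, b i j * ρ i * ρ j * (u i - u j) ^ 2 := by
    intro u
    have hS : ∑ i, u i * (B *ᵥ u) i
        = ∑ i, ∑ j, if j = i then 0 else b i j * ρ i * ρ j * u i * (u i - u j) := by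
      refine Finset.sum_congr rfl fun i _ => ?_
      rw [hrow, Finset.mul_sum,
        Finset.sum_congr rfl (fun j (_ : j ∈ Finset.univ.erase i) =>
          (by ring : u i * (b i j * ρ i * ρ j * (u i - u j))
            = b i j * ρ i * ρ j * u i * (u i - u j))),
        key (fun j => b i j * ρ i * ρ j * u i * (u i - u j)) i]
    have hswap : ∑ i, ∑ j, (if j = i then 0 else b i j * ρ i * ρ j * u i * (u i - u j))
        = ∑ i, ∑ j, (if j = i then 0 else b j i * ρ j * ρ i * u j * (u j - u i)) := by
      rw [Finset.sum_comm]
      refine Finset.sum_congr rfl fun i _ => Finset.sum_congr rfl fun j _ => ?_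
      by_cases h : i = j
      · simp [h]
      · rw [if_neg h, if_neg fun hh => h hh.symm]
    rw [hS, two_mul]
    nth_rewrite 2 [hswap]
    rw [← Finset.sum_add_distrib]
    refine Finset.sum_congr rfl fun i _ => ?_
    rw [key (fun j => b i j * ρ i * ρ j * (u i - u j) ^ 2) i, ← Finset.sum_add_distrib]
    refine Finset.sum_congr rfl fun j _ => ?_
    by_cases h : j = i
    · simp [h]
    · rw [if_neg h, if_neg h, if_neg h, hb j i h]
      ring
  have hterm_nonneg : ∀ (u : Fin n → ℝ) i, ∀ j ∈ Finset.univ.erase i,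
      (0:ℝ) ≤ b i j * ρ i * ρ j * (u i - u j) ^ 2 := by
    intro u i j hj
    have hji : j ≠ i := Finset.ne_of_mem_erase hj
    have h1 := hbpos i j hji.symm
    have h2 := hρ i
    have h3 := hρ j
    positivity
  have hquad_nonneg : ∀ u : Fin n → ℝ, 0 ≤ ∑ i, u i * (B *ᵥ u) i := by
    intro u
    have h2 := hquad u
    have h4 : (0:ℝ) ≤ ∑ i, ∑ j ∈ Finset.univ.erase i, b i j * ρ i * ρ j * (u i - u j) ^ 2 :=
      Finset.sum_nonneg fun i _ => Finset.sum_nonneg (hterm_nonneg u i)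
    linarith
  -- the linear functional
  let φ : (Fin n → ℝ) →ₗ[ℝ] ℝ :=
    { toFun := fun u => ∑ i, ρ i * u i
      map_add' := by intro x y; simp [mul_add, Finset.sum_add_distrib]
      map_smul' := by
        intro c x
        simp only [Pi.smul_apply, smul_eq_mul, RingHom.id_apply, Finset.mul_sum]
        exact Finset.sum_congr rfl fun i _ => by ring }
  -- the augmented linear map
  let L : (Fin n → ℝ) →ₗ[ℝ] (Fin n → ℝ) := B.mulVecLin + φ.smulRight ρ
  have hLdef : ∀ u, L u = B *ᵥ u + (∑ i, ρ i * u i) • ρ := fun u => rfl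
  have hρsum : 0 < ∑ i, ρ i :=
    Finset.sum_pos (fun i _ => hρ i) ⟨⟨0, hn⟩, Finset.mem_univ _⟩
  have hinj : Function.Injective L := by
    rw [injective_iff_map_eq_zero]
    intro u hu
    have hdot : ∑ i, u i * (L u) i = 0 := by rw [hu]; simp
    have hexp : ∑ i, u i * (L u) i
        = (∑ i, u i * (B *ᵥ u) i) + (∑ i, ρ i * u i) ^ 2 := by
      simp only [hLdef, Pi.add_apply, Pi.smul_apply, smul_eq_mul, mul_add]
      rw [Finset.sum_add_distrib]
      congr 1
      rw [sq, Finset.mul_sum]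
      exact Finset.sum_congr rfl fun i _ => by ring
    have hq := hquad_nonneg u
    have hsq : (0:ℝ) ≤ (∑ i, ρ i * u i) ^ 2 := sq_nonneg _
    have hq0 : ∑ i, u i * (B *ᵥ u) i = 0 := by linarith [hexp ▸ hdot]
    have hφ0 : ∑ i, ρ i * u i = 0 := by
      have : (∑ i, ρ i * u i) ^ 2 = 0 := by linarith [hexp ▸ hdot]
      exact pow_eq_zero_iff (by norm_num) |>.mp this
    -- all coordinates of u are equal
    have hsum0 : ∑ i, ∑ j ∈ Finset.univ.erase i, b i j * ρ i * ρ j * (u i - u j) ^ 2 = 0 := by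
      have := hquad u
      linarith
    have hconst : ∀ i j : Fin n, u i = u j := by
      intro i j
      by_cases hij : i = j
      · rw [hij]
      have hterm : b i j * ρ i * ρ j * (u i - u j) ^ 2 = 0 := by
        have hinner : ∑ j ∈ Finset.univ.erase i, b i j * ρ i * ρ j * (u i - u j) ^ 2 = 0 := by
          have := (Finset.sum_eq_zero_iff_of_nonneg
            (fun k (_ : k ∈ (Finset.univ : Finset (Fin n))) =>
              Finset.sum_nonneg (hterm_nonneg u k))).mp hsum0 i (Finset.mem_univ i)
          exact this
        exact (Finset.sum_eq_zero_iff_of_nonneg (hterm_nonneg u i)).mp hinner j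
          (Finset.mem_erase.mpr ⟨fun hh => hij hh.symm, Finset.mem_univ j⟩)
      have hpos : 0 < b i j * ρ i * ρ j :=
        mul_pos (mul_pos (hbpos i j hij) (hρ i)) (hρ j)
      have : (u i - u j) ^ 2 = 0 := by
        rcases mul_eq_zero.mp hterm with h | h
        · exact absurd h (ne_of_gt hpos)
        · exact h
      have := pow_eq_zero_iff (n := 2) (by norm_num) |>.mp this
      linarith
    have i0 : Fin n := ⟨0, hn⟩
    have hu0 : u i0 = 0 := by
      have : ∑ i, ρ i * u i = (∑ i, ρ i) * u i0 := by
        rw [Finset.sum_mul]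
        exact Finset.sum_congr rfl fun i _ => by rw [hconst i i0]
      rw [this] at hφ0
      rcases mul_eq_zero.mp hφ0 with h | h
      · exact absurd h (ne_of_gt hρsum)
      · exact h
    funext i
    rw [Pi.zero_apply, hconst i i0, hu0]
  have hsurj : Function.Surjective L :=
    (LinearMap.injective_iff_surjective).mp hinj
  obtain ⟨u, hu⟩ := hsurj d
  -- show the constraint holds for u
  have hφu : ∑ i, ρ i * u i = 0 := by
    have hsum : ∑ i, (L u) i = ∑ i, d i := by rw [hu]
    have hBsum : ∑ i, (B *ᵥ u) i = 0 := by
      have : ∑ i, (B *ᵥ u) i = ∑ j, (∑ i, B i j) * u j := by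
        simp only [mulVec, dotProduct]
        rw [Finset.sum_comm]
        exact Finset.sum_congr rfl fun j _ => (Finset.sum_mul _ _ _).symm
      rw [this]
      exact Finset.sum_eq_zero fun j _ => by rw [hcol j, zero_mul]
    have hLsum : ∑ i, (L u) i
        = ∑ i, (B *ᵥ u) i + (∑ i, ρ i * u i) * ∑ i, ρ i := by
      simp only [hLdef, Pi.add_apply, Pi.smul_apply, smul_eq_mul]
      rw [Finset.sum_add_distrib, ← Finset.mul_sum]
    rw [hd, hLsum, hBsum, zero_add] at hsum
    rcases mul_eq_zero.mp hsum with h | h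
    · exact h
    · exact absurd h (ne_of_gt hρsum)
  have hBu : B *ᵥ u = d := by
    have h := hu
    rw [hLdef, hφu, zero_smul, add_zero] at h
    exact h
  refine ⟨u, ⟨hBu, hφu⟩, ?_⟩
  intro v ⟨hv1, hv2⟩
  apply hinj
  rw [hLdef, hLdef, hv1, hv2, hφu, hBu, zero_smul]
end

section
/- Let E be a finite-dimensional real inner product space, let M : E →ₗ[ℝ] E be self-adjoint and positive semidefinite (⟪M x, x⟫ ≥ 0 for all x), and let V be a subspace of E with (ker M) ⊓ V = ⊥. Let P_V and P_{V⊥} denote the orthogonal projections onto V and its orthogonal complement. Then the linear map M ∘ P_V + P_{V⊥} is bijective. -/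
open RealInnerProductSpace

/-- The orthogonal projection onto a subspace, as a linear endomorphism. -/
noncomputable def orthProj {E : Type*} [NormedAddCommGroup E] [InnerProductSpace ℝ E]
    [FiniteDimensional ℝ E] (V : Submodule ℝ E) : E →ₗ[ℝ] E :=
  (V.subtypeL.comp (V.orthogonalProjectionOnto)).toLinearMap

namespace LinearMap

variable {𝕜 E : Type*} [RCLike 𝕜] [NormedAddCommGroup E] [InnerProductSpace 𝕜 E]

/-- The quadratic form `t ↦ re ⟪T (x - t T x), x - t T x⟫ = c t² - 2 ‖T x‖² t` is nonnegative and
has a root at `0`, so its discriminant `4 ‖T x‖⁴` vanishes. -/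
theorem IsPositive.apply_eq_zero_of_inner_self_eq_zero {T : E →ₗ[𝕜] E} (hT : T.IsPositive)
    {x : E} (hx : inner 𝕜 (T x) x = 0) : T x = 0 := by
  set c := RCLike.re (inner 𝕜 (T (T x)) (T x))
  have hquad (t : ℝ) : 0 ≤ c * (t * t) + (-2 * ‖T x‖ ^ 2) * t + 0 := by
    have hsym : inner 𝕜 (T (T x)) x = inner 𝕜 (T x) (T x) := hT.isSymmetric _ _
    have hexpand : RCLike.re (inner 𝕜 (T (x - (t : 𝕜) • T x)) (x - (t : 𝕜) • T x)) =
        c * (t * t) + (-2 * ‖T x‖ ^ 2) * t := by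
      simp only [map_sub, map_smul, inner_sub_right, inner_sub_left, hx, inner_smul_left,
        RCLike.conj_ofReal, hsym, inner_self_eq_norm_sq_to_K, zero_sub, inner_smul_right, map_neg,
        RCLike.mul_re, RCLike.ofReal_re, RCLike.re_ofReal_pow, RCLike.ofReal_im,
        RCLike.im_ofReal_pow, mul_zero, sub_zero, zero_mul, RCLike.mul_im, add_zero, mul_neg,
        neg_zero, neg_mul, c]
      ring
    linarith [hT.re_inner_nonneg_left (x - (t : 𝕜) • T x)]
  have hdiscr : discrim c (-2 * ‖T x‖ ^ 2) 0 ≤ 0 := discrim_le_zero hquad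
  have hnorm : ‖T x‖ ^ 4 ≤ 0 := by
    rw [discrim] at hdiscr
    linarith
  exact norm_eq_zero.mp (pow_eq_zero_iff four_ne_zero |>.mp (hnorm.antisymm (by positivity)))

end LinearMap

section orthProj

variable {E : Type*} [NormedAddCommGroup E] [InnerProductSpace ℝ E] [FiniteDimensional ℝ E]

theorem orthProj_apply_mem (V : Submodule ℝ E) (x : E) : orthProj V x ∈ V :=
  V.starProjection_apply_mem x

theorem orthProj_add_orthProj_orthogonal (V : Submodule ℝ E) (x : E) :
    orthProj V x + orthProj Vᗮ x = x :=
  V.starProjection_add_starProjection_orthogonal x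

end orthProj

/-- A kernel vector `x` of `M ∘ P_V + P_{V⊥}` has `M (P_V x) = -P_{V⊥} x ⊥ P_V x`; positivity of `M`
then puts `P_V x` in `ker M ⊓ V = ⊥`, so both components of `x` vanish. Injectivity suffices in
finite dimension. -/
theorem bott_duffin_invertibility
    {E : Type*} [NormedAddCommGroup E] [InnerProductSpace ℝ E] [FiniteDimensional ℝ E]
    (M : E →ₗ[ℝ] E)
    (hMsym : ∀ x y : E, ⟪M x, y⟫ = ⟪x, M y⟫)
    (hMpsd : ∀ x : E, 0 ≤ ⟪M x, x⟫)
    (V : Submodule ℝ E)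
    (hker : LinearMap.ker M ⊓ V = ⊥) :
    Function.Bijective (M ∘ₗ orthProj V + orthProj Vᗮ) := by
  have hM : M.IsPositive := ⟨hMsym, hMpsd⟩
  have hinj : Function.Injective (M ∘ₗ orthProj V + orthProj Vᗮ) := by
    rw [← LinearMap.ker_eq_bot, LinearMap.ker_eq_bot']
    intro x hx
    have hMv : M (orthProj V x) = -orthProj Vᗮ x := eq_neg_of_add_eq_zero_left hx
    have hinner : ⟪M (orthProj V x), orthProj V x⟫ = 0 := by
      rw [hMv, inner_neg_left,
        V.inner_left_of_mem_orthogonal (orthProj_apply_mem V x) (orthProj_apply_mem Vᗮ x), neg_zero]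
    have hv : orthProj V x = 0 := by
      have hmem : orthProj V x ∈ LinearMap.ker M ⊓ V :=
        ⟨hM.apply_eq_zero_of_inner_self_eq_zero hinner, orthProj_apply_mem V x⟩
      rwa [hker] at hmem
    have hw : orthProj Vᗮ x = 0 := neg_eq_zero.mp (by rw [← hMv, hv, map_zero])
    rw [← orthProj_add_orthProj_orthogonal V x, hv, hw, add_zero]
  exact ⟨hinj, LinearMap.injective_iff_surjective.mp hinj⟩
end

section
/- Let M > 0 and let x, y ∈ ℝ with 0 < x ≤ M and 0 < y ≤ M. Then x * Real.log (x/y) - x + y ≥ (x - y)² / (2 * M). -/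
/-- For `u ≥ 0`, `sinh u ≤ u * cosh u`. -/
lemma sinh_le_mul_cosh {u : ℝ} (hu : 0 ≤ u) : Real.sinh u ≤ u * Real.cosh u := by
  have key : MonotoneOn (fun x => x * Real.cosh x - Real.sinh x) (Set.Ici (0:ℝ)) := by
    apply monotoneOn_of_deriv_nonneg (convex_Ici 0)
    · exact ((continuous_id.mul Real.continuous_cosh).sub Real.continuous_sinh).continuousOn
    · intro x _
      exact (((hasDerivAt_id x).mul (Real.hasDerivAt_cosh x)).sub
        (Real.hasDerivAt_sinh x)).differentiableAt.differentiableWithinAt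
    · intro x hx
      rw [interior_Ici] at hx
      have hd : HasDerivAt (fun x => x * Real.cosh x - Real.sinh x)
          (1 * Real.cosh x + x * Real.sinh x - Real.cosh x) x :=
        ((hasDerivAt_id x).mul (Real.hasDerivAt_cosh x)).sub (Real.hasDerivAt_sinh x)
      rw [hd.deriv]
      have h1 : 0 ≤ x * Real.sinh x :=
        mul_nonneg hx.le (Real.sinh_nonneg_iff.mpr hx.le)
      linarith
  have h0 := key (Set.self_mem_Ici) (Set.mem_Ici.mpr hu) hu
  simp only [Real.sinh_zero, Real.cosh_zero, zero_mul, sub_zero, mul_one] at h0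
  linarith

/-- For `s ≥ 1`, `log s ≤ (s - s⁻¹)/2`. -/
lemma log_le_half_sub_inv {s : ℝ} (hs : 1 ≤ s) :
    Real.log s ≤ (s - s⁻¹) / 2 := by
  have h0 : (0:ℝ) < s := lt_of_lt_of_le one_pos hs
  have h1 : 0 ≤ Real.log s := Real.log_nonneg hs
  have h2 : Real.log s ≤ Real.sinh (Real.log s) :=
    Real.self_le_sinh_iff.mpr h1
  rwa [Real.sinh_log h0] at h2

/-- For `t ≥ 1`, `2(t-1)/(t+1) ≤ log t`. -/
lemma two_sub_div_le_log {t : ℝ} (ht : 1 ≤ t) :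
    2 * (t - 1) / (t + 1) ≤ Real.log t := by
  have h0 : (0:ℝ) < t := lt_of_lt_of_le one_pos ht
  set r := Real.sqrt t with hr
  have hr1 : 1 ≤ r := by
    rw [hr, show (1:ℝ) = Real.sqrt 1 by simp]
    exact Real.sqrt_le_sqrt ht
  have hr0 : (0:ℝ) < r := lt_of_lt_of_le one_pos hr1
  have hrt : r ^ 2 = t := Real.sq_sqrt h0.le
  have hlog : Real.log t = 2 * Real.log r := by
    rw [← hrt, Real.log_pow]; push_cast; ring
  have hu : 0 ≤ Real.log r := Real.log_nonneg hr1
  have h := sinh_le_mul_cosh hu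
  rw [Real.sinh_log hr0, Real.cosh_log hr0] at h
  have hrinv : r * r⁻¹ = 1 := mul_inv_cancel₀ hr0.ne'
  have h2 : r ^ 2 - 1 ≤ Real.log r * (r ^ 2 + 1) := by
    have hm := mul_le_mul_of_nonneg_right h hr0.le
    nlinarith [hm, hrinv, hu]
  rw [hlog, ← hrt, div_le_iff₀ (by positivity)]
  nlinarith [h2]

theorem relative_entropy_quadratic_lower_bound
    (M : ℝ) (hM : 0 < M) (x y : ℝ)
    (hx : 0 < x) (hxM : x ≤ M) (hy : 0 < y) (hyM : y ≤ M) :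
    x * Real.log (x / y) - x + y ≥ (x - y) ^ 2 / (2 * M) := by
  rcases le_total y x with hxy | hxy
  · -- x ≥ y : use log t ≥ 2(t-1)/(t+1) with t = x/y
    have ht : 1 ≤ x / y := (one_le_div hy).mpr hxy
    have h := two_sub_div_le_log ht
    have hxy0 : 0 < x + y := by linarith
    have hkey : 2 * (x - y) / (x + y) ≤ Real.log (x / y) := by
      have heq : 2 * (x / y - 1) / (x / y + 1) = 2 * (x - y) / (x + y) := by
        rw [div_eq_div_iff (by positivity) hxy0.ne']
        field_simp
      linarith [heq ▸ h]
    have h3 : x * (2 * (x - y) / (x + y)) ≤ x * Real.log (x / y) :=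
      mul_le_mul_of_nonneg_left hkey hx.le
    have h4 : x * (2 * (x - y) / (x + y)) - x + y = (x - y) ^ 2 / (x + y) := by
      field_simp
      ring
    have h5 : (x - y) ^ 2 / (x + y) ≤ x * Real.log (x / y) - x + y := by
      rw [← h4]; linarith
    have h6 : (x - y) ^ 2 / (2 * M) ≤ (x - y) ^ 2 / (x + y) :=
      div_le_div_of_nonneg_left (sq_nonneg _) hxy0 (by linarith)
    linarith
  · -- x ≤ y : use log s ≤ (s - 1/s)/2 with s = y/x
    have hs : 1 ≤ y / x := (one_le_div hx).mpr hxy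
    have h := log_le_half_sub_inv hs
    have hlog : Real.log (x / y) = - Real.log (y / x) := by
      rw [← Real.log_inv]
      congr 1
      field_simp
    have hinv : (y / x)⁻¹ = x / y := by
      rw [inv_div]
    rw [hinv] at h
    have h2 : Real.log (y / x) ≤ (y ^ 2 - x ^ 2) / (2 * x * y) := by
      have heq : (y / x - x / y) / 2 = (y ^ 2 - x ^ 2) / (2 * x * y) := by
        field_simp
      linarith [heq ▸ h]
    have h3 : x * Real.log (y / x) ≤ (y ^ 2 - x ^ 2) / (2 * y) := by
      have hm := mul_le_mul_of_nonneg_left h2 hx.le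
      have heq : x * ((y ^ 2 - x ^ 2) / (2 * x * y)) = (y ^ 2 - x ^ 2) / (2 * y) := by
        field_simp
      linarith [heq ▸ hm]
    have h4 : -((y ^ 2 - x ^ 2) / (2 * y)) - x + y = (x - y) ^ 2 / (2 * y) := by
      field_simp
      ring
    have h5 : (x - y) ^ 2 / (2 * y) ≤ x * Real.log (x / y) - x + y := by
      rw [hlog]
      have hring : x * -Real.log (y / x) = -(x * Real.log (y / x)) := by ring
      rw [hring, ← h4]
      linarith
    have h6 : (x - y) ^ 2 / (2 * M) ≤ (x - y) ^ 2 / (2 * y) :=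
      div_le_div_of_nonneg_left (sq_nonneg _) (by linarith) (by linarith)
    linarith
end
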